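/- (Bounded context-dependence of the reward.) Let ε: X → [0,∞) and suppose there exists a context-free function r0: S×A → ℝ such that |r(s,a,x) − r0(s,a)| ≤ ε(x) for all s ∈ S, a ∈ A, x ∈ X. Let π* be any policy and let π0 ∈ Π₀(π*). Then v_{ρo}(π0) ≥ v_{ρe}(π*) − ε_{oe}, where ε_{oe} = E_{x∼ρo}[ε(x)] + E_{x∼ρe}[ε(x)] and v_ρ(π) = Σ_{x,s,a} ρ(x) d^π(s,a|x) r(s,a,x). -/
import Mathlib


open scoped BigOperators

/-- `p` is a probability mass function on a finite type. -/
def IsProb {Z : Type*} [Fintype Z] (p : Z → ℝ) : Prop :=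
  (∀ z, 0 ≤ p z) ∧ ∑ z, p z = 1

section CMDP

variable {S X A : Type*} [Fintype S] [Fintype X] [Fintype A]

/-- A Markovian stationary policy: a distribution over actions for each state–context pair. -/
def IsPolicy (π : S → X → A → ℝ) : Prop :=
  ∀ s x, IsProb (π s x)

/-- The deterministic policy induced by an action map `f`. -/
def detPolicy [DecidableEq A] (f : S → X → A) : S → X → A → ℝ :=
  fun s x a => if a = f s x then 1 else 0

/-- A policy is deterministic if it is induced by an action map. -/
def IsDet [DecidableEq A] (π : S → X → A → ℝ) : Prop :=
  ∃ f : S → X → A, π = detPolicy f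

/-- The `t`-step state distribution of the Markov chain induced by policy `π` in context `x`,
starting from `s₀ ∼ ν(·|x)`. -/
noncomputable def stateDist (P : S → A → X → S → ℝ) (ν : X → S → ℝ)
    (π : S → X → A → ℝ) (x : X) : ℕ → S → ℝ
  | 0 => fun s => ν x s
  | (t+1) => fun s' => ∑ s, ∑ a, stateDist P ν π x t s * π s x a * P s a x s'

/-- The per-context (discounted) stationary distribution
`d^π(s,a|x) = (1−γ) Σ_t γ^t P^π(s_t = s, a_t = a | x)`. -/
noncomputable def dCtx (γ : ℝ) (P : S → A → X → S → ℝ) (ν : X → S → ℝ)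
    (π : S → X → A → ℝ) (x : X) (s : S) (a : A) : ℝ :=
  (1 - γ) * ∑' t : ℕ, γ ^ t * (stateDist P ν π x t s * π s x a)

/-- Marginalized stationary distribution `d_ρ^π(s,a) = E_{x∼ρ}[d^π(s,a|x)]`. -/
noncomputable def dMarg (γ : ℝ) (P : S → A → X → S → ℝ) (ν : X → S → ℝ)
    (ρ : X → ℝ) (π : S → X → A → ℝ) (s : S) (a : A) : ℝ :=
  ∑ x, ρ x * dCtx γ P ν π x s a

/-- The `ρ`-marginalized value `v_ρ(π) = Σ_{x,s,a} ρ(x) d^π(s,a|x) r(s,a,x)`. -/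
noncomputable def val (γ : ℝ) (P : S → A → X → S → ℝ) (ν : X → S → ℝ)
    (ρ : X → ℝ) (r : S → A → X → ℝ) (π : S → X → A → ℝ) : ℝ :=
  ∑ x, ∑ s, ∑ a, ρ x * dCtx γ P ν π x s a * r s a x

/-- The ambiguity set `Π₀(π)`: deterministic policies whose `ρo`-marginalized stationary
distribution matches the `ρe`-marginalized stationary distribution of `π`. -/
def AmbSet [DecidableEq A] (γ : ℝ) (P : S → A → X → S → ℝ) (ν : X → S → ℝ)
    (ρo ρe : X → ℝ) (π : S → X → A → ℝ) : Set (S → X → A → ℝ) :=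
  {π' | IsDet π' ∧ ∀ s a, dMarg γ P ν ρo π' s a = dMarg γ P ν ρe π s a}

end CMDP


section Aux

variable {S X A : Type*} [Fintype S] [Fintype X] [Fintype A]

lemma detPolicy_isPolicy [DecidableEq A] (f : S → X → A) : IsPolicy (detPolicy f) := by
  intro s x
  constructor
  · intro a; unfold detPolicy; split_ifs <;> norm_num
  · simp [detPolicy]

lemma stateDist_nonneg {γ : ℝ} {P : S → A → X → S → ℝ} {ν : X → S → ℝ} {π : S → X → A → ℝ}
    (hP : ∀ s a x, IsProb (P s a x)) (hν : ∀ x, IsProb (ν x)) (hπ : IsPolicy π) (x : X) :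
    ∀ t s, 0 ≤ stateDist P ν π x t s
  | 0, s => (hν x).1 s
  | (t+1), s' => Finset.sum_nonneg fun s _ => Finset.sum_nonneg fun a _ =>
      mul_nonneg (mul_nonneg (stateDist_nonneg (γ := γ) hP hν hπ x t s) ((hπ s x).1 a))
        ((hP s a x).1 s')

lemma stateDist_sum {P : S → A → X → S → ℝ} {ν : X → S → ℝ} {π : S → X → A → ℝ}
    (hP : ∀ s a x, IsProb (P s a x)) (hν : ∀ x, IsProb (ν x)) (hπ : IsPolicy π) (x : X) :
    ∀ t, ∑ s, stateDist P ν π x t s = 1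
  | 0 => (hν x).2
  | (t+1) => by
    simp only [stateDist]
    rw [Finset.sum_comm]
    have key : ∀ s, ∑ s', ∑ a, stateDist P ν π x t s * π s x a * P s a x s'
        = stateDist P ν π x t s := by
      intro s
      rw [Finset.sum_comm]
      have h1 : ∀ a, ∑ s', stateDist P ν π x t s * π s x a * P s a x s'
          = stateDist P ν π x t s * π s x a := by
        intro a; rw [← Finset.mul_sum, (hP s a x).2, mul_one]
      simp only [h1]
      rw [← Finset.mul_sum, (hπ s x).2, mul_one]
    simp only [key]
    exact stateDist_sum hP hν hπ x t

lemma stateDist_le_one {P : S → A → X → S → ℝ} {ν : X → S → ℝ} {π : S → X → A → ℝ}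
    (hP : ∀ s a x, IsProb (P s a x)) (hν : ∀ x, IsProb (ν x)) (hπ : IsPolicy π) (x : X)
    (t : ℕ) (s : S) : stateDist P ν π x t s ≤ 1 := by
  have h := stateDist_sum hP hν hπ x t
  calc stateDist P ν π x t s
      ≤ ∑ s', stateDist P ν π x t s' :=
        Finset.single_le_sum (fun i _ => stateDist_nonneg (γ := (0:ℝ)) hP hν hπ x t i)
          (Finset.mem_univ s)
    _ = 1 := h

lemma summable_aux {γ : ℝ} (hγ : 0 < γ ∧ γ < 1) {P : S → A → X → S → ℝ} {ν : X → S → ℝ}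
    {π : S → X → A → ℝ} (hP : ∀ s a x, IsProb (P s a x)) (hν : ∀ x, IsProb (ν x))
    (hπ : IsPolicy π) (x : X) (s : S) (a : A) :
    Summable (fun t => γ ^ t * (stateDist P ν π x t s * π s x a)) := by
  refine Summable.of_nonneg_of_le (fun t => ?_) (fun t => ?_)
    (summable_geometric_of_lt_one hγ.1.le hγ.2)
  · exact mul_nonneg (pow_nonneg hγ.1.le t)
      (mul_nonneg (stateDist_nonneg (γ := γ) hP hν hπ x t s) ((hπ s x).1 a))
  · have hsd0 := stateDist_nonneg (γ := γ) hP hν hπ x t s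
    have hsd1 := stateDist_le_one hP hν hπ x t s
    have hπ0 := (hπ s x).1 a
    have hπ1 : π s x a ≤ 1 := by
      have h := (hπ s x).2
      calc π s x a ≤ ∑ a', π s x a' :=
            Finset.single_le_sum (fun i _ => (hπ s x).1 i) (Finset.mem_univ a)
        _ = 1 := h
    have hp : (0:ℝ) ≤ γ ^ t := pow_nonneg hγ.1.le t
    have hsp : stateDist P ν π x t s * π s x a ≤ 1 := by nlinarith
    calc γ ^ t * (stateDist P ν π x t s * π s x a) ≤ γ ^ t * 1 :=
          mul_le_mul_of_nonneg_left hsp hp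
      _ = γ ^ t := mul_one _

lemma dCtx_nonneg {γ : ℝ} (hγ : 0 < γ ∧ γ < 1) {P : S → A → X → S → ℝ} {ν : X → S → ℝ}
    {π : S → X → A → ℝ} (hP : ∀ s a x, IsProb (P s a x)) (hν : ∀ x, IsProb (ν x))
    (hπ : IsPolicy π) (x : X) (s : S) (a : A) : 0 ≤ dCtx γ P ν π x s a := by
  unfold dCtx
  refine mul_nonneg (by linarith [hγ.2]) (tsum_nonneg fun t => ?_)
  exact mul_nonneg (pow_nonneg hγ.1.le t)
    (mul_nonneg (stateDist_nonneg (γ := γ) hP hν hπ x t s) ((hπ s x).1 a))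

lemma dCtx_sum {γ : ℝ} (hγ : 0 < γ ∧ γ < 1) {P : S → A → X → S → ℝ} {ν : X → S → ℝ}
    {π : S → X → A → ℝ} (hP : ∀ s a x, IsProb (P s a x)) (hν : ∀ x, IsProb (ν x))
    (hπ : IsPolicy π) (x : X) : ∑ s, ∑ a, dCtx γ P ν π x s a = 1 := by
  unfold dCtx
  have h1 : ∀ s : S, ∑ a, (1 - γ) * ∑' t : ℕ, γ ^ t * (stateDist P ν π x t s * π s x a)
      = (1 - γ) * ∑' t : ℕ, ∑ a, γ ^ t * (stateDist P ν π x t s * π s x a) := by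
    intro s
    rw [← Finset.mul_sum, ← Summable.tsum_finsetSum fun a _ => summable_aux hγ hP hν hπ x s a]
  simp only [h1]
  rw [← Finset.mul_sum,
    ← Summable.tsum_finsetSum fun s _ => summable_sum fun a _ => summable_aux hγ hP hν hπ x s a]
  have h2 : ∀ t : ℕ, ∑ s, ∑ a, γ ^ t * (stateDist P ν π x t s * π s x a) = γ ^ t := by
    intro t
    have h3 : ∀ s : S, ∑ a, γ ^ t * (stateDist P ν π x t s * π s x a)
        = γ ^ t * stateDist P ν π x t s := by
      intro s
      rw [show (fun a => γ ^ t * (stateDist P ν π x t s * π s x a))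
          = (fun a => γ ^ t * stateDist P ν π x t s * π s x a) from by funext a; ring]
      rw [← Finset.mul_sum, (hπ s x).2, mul_one]
    simp only [h3]
    rw [← Finset.mul_sum, stateDist_sum hP hν hπ x t, mul_one]
  simp only [h2]
  rw [tsum_geometric_of_lt_one hγ.1.le hγ.2]
  rw [mul_inv_cancel₀ (by linarith [hγ.2] : (1:ℝ) - γ ≠ 0)]

lemma val_r0 {γ : ℝ} (P : S → A → X → S → ℝ) (ν : X → S → ℝ) (ρ : X → ℝ)
    (r0 : S → A → ℝ) (π : S → X → A → ℝ) :
    val γ P ν ρ (fun s a _ => r0 s a) π = ∑ s, ∑ a, dMarg γ P ν ρ π s a * r0 s a := by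
  unfold val dMarg
  rw [Finset.sum_comm]
  refine Finset.sum_congr rfl fun s _ => ?_
  rw [Finset.sum_comm]
  refine Finset.sum_congr rfl fun a _ => ?_
  rw [Finset.sum_mul]

lemma val_close {γ : ℝ} (hγ : 0 < γ ∧ γ < 1) {P : S → A → X → S → ℝ} {ν : X → S → ℝ}
    (hP : ∀ s a x, IsProb (P s a x)) (hν : ∀ x, IsProb (ν x))
    {ρ : X → ℝ} (hρ : IsProb ρ) {π : S → X → A → ℝ} (hπ : IsPolicy π)
    {r : S → A → X → ℝ} {r0 : S → A → ℝ} {ε : X → ℝ}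
    (hr0 : ∀ s a x, |r s a x - r0 s a| ≤ ε x) :
    |val γ P ν ρ r π - val γ P ν ρ (fun s a _ => r0 s a) π| ≤ ∑ x, ρ x * ε x := by
  have hdiff : val γ P ν ρ r π - val γ P ν ρ (fun s a _ => r0 s a) π
      = ∑ x, ∑ s, ∑ a, ρ x * dCtx γ P ν π x s a * (r s a x - r0 s a) := by
    unfold val
    rw [← Finset.sum_sub_distrib]
    refine Finset.sum_congr rfl fun x _ => ?_
    rw [← Finset.sum_sub_distrib]
    refine Finset.sum_congr rfl fun s _ => ?_
    rw [← Finset.sum_sub_distrib]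
    exact Finset.sum_congr rfl fun a _ => by ring
  rw [hdiff]
  refine (Finset.abs_sum_le_sum_abs _ _).trans (Finset.sum_le_sum fun x _ => ?_)
  have h1 : |∑ s, ∑ a, ρ x * dCtx γ P ν π x s a * (r s a x - r0 s a)|
      ≤ ∑ s, ∑ a, ρ x * dCtx γ P ν π x s a * ε x := by
    refine (Finset.abs_sum_le_sum_abs _ _).trans (Finset.sum_le_sum fun s _ => ?_)
    refine (Finset.abs_sum_le_sum_abs _ _).trans (Finset.sum_le_sum fun a _ => ?_)
    rw [abs_mul]
    have hd0 : 0 ≤ ρ x * dCtx γ P ν π x s a :=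
      mul_nonneg (hρ.1 x) (dCtx_nonneg hγ hP hν hπ x s a)
    rw [abs_of_nonneg hd0]
    exact mul_le_mul_of_nonneg_left (hr0 s a x) hd0
  refine h1.trans (le_of_eq ?_)
  have h3 : ∀ s : S, ∑ a, ρ x * dCtx γ P ν π x s a * ε x
      = ρ x * ε x * ∑ a, dCtx γ P ν π x s a := by
    intro s
    rw [Finset.mul_sum]
    exact Finset.sum_congr rfl fun a _ => by ring
  simp only [h3]
  rw [← Finset.mul_sum, dCtx_sum hγ hP hν hπ x, mul_one]

end Aux

/-- **Bounded context-dependence of the reward.** If the reward is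
`ε(x)`-close to a context-free reward `r0`, then for any policy `π*` and any
`π0 ∈ Π₀(π*)`: `v_{ρo}(π0) ≥ v_{ρe}(π*) − (E_{ρo}[ε] + E_{ρe}[ε])`. -/
theorem bounded_reward_dependence
    {S X A : Type*} [Fintype S] [Fintype X] [Fintype A] [DecidableEq A]
    [Nonempty S] [Nonempty X] [Nonempty A]
    (γ : ℝ) (hγ : 0 < γ ∧ γ < 1)
    (P : S → A → X → S → ℝ) (hP : ∀ s a x, IsProb (P s a x))
    (ν : X → S → ℝ) (hν : ∀ x, IsProb (ν x))
    (ρo ρe : X → ℝ) (hρo : IsProb ρo) (hρe : IsProb ρe)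
    (r : S → A → X → ℝ) (hr : ∀ s a x, r s a x ∈ Set.Icc (0:ℝ) 1)
    (ε : X → ℝ) (hε : ∀ x, 0 ≤ ε x)
    (r0 : S → A → ℝ) (hr0 : ∀ s a x, |r s a x - r0 s a| ≤ ε x)
    (πstar : S → X → A → ℝ) (hπstar : IsPolicy πstar)
    (π0 : S → X → A → ℝ) (hπ0 : π0 ∈ AmbSet γ P ν ρo ρe πstar) :
    val γ P ν ρo r π0 ≥
      val γ P ν ρe r πstar - ((∑ x, ρo x * ε x) + (∑ x, ρe x * ε x)) := by
  obtain ⟨⟨f, rfl⟩, hmatch⟩ := hπ0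
  have hπ0' : IsPolicy (detPolicy f) := detPolicy_isPolicy f
  have heq : val γ P ν ρo (fun s a _ => r0 s a) (detPolicy f)
      = val γ P ν ρe (fun s a _ => r0 s a) πstar := by
    rw [val_r0, val_r0]
    refine Finset.sum_congr rfl fun s _ => Finset.sum_congr rfl fun a _ => ?_
    rw [hmatch s a]
  have h1 := val_close hγ hP hν hρo hπ0' hr0 (r := r) (ε := ε)
  have h2 := val_close hγ hP hν hρe hπstar hr0 (r := r) (ε := ε)
  have h1' := abs_le.mp h1
  have h2' := abs_le.mp h2
  linarith [h1'.1, h1'.2, h2'.1, h2'.2, heq]
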